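/- Let n, m, r be natural numbers and μ, λ reals with 1 − 2μλ ≥ 0. Let (W_s)_{s∈ℕ} and (G_s)_{s∈ℕ} be sequences of n×m real matrices satisfying W_{s+1} = (1 − 2μλ)·W_s − μ·G_s for all s, and rank(G_s) ≤ r for all s. Then for every t ∈ ℕ and every k ≤ t with W_t ≠ 0, there exists an n×m real matrix M with rank(M) ≤ r·k and ‖ (1/‖W_t‖_F)·W_t − M ‖_F ≤ (1 − 2μλ)^k · ‖W_{t−k}‖_F / ‖W_t‖_F. -/

import Mathlib

/-- The Frobenius norm of an n×m real matrix. -/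
noncomputable def frobNorm {n m : ℕ} (A : Matrix (Fin n) (Fin m) ℝ) : ℝ :=
  Real.sqrt (∑ i, ∑ j, (A i j) ^ 2)

lemma frobNorm_nonneg {n m : ℕ} (A : Matrix (Fin n) (Fin m) ℝ) : 0 ≤ frobNorm A :=
  Real.sqrt_nonneg _

lemma frobNorm_smul {n m : ℕ} (c : ℝ) (A : Matrix (Fin n) (Fin m) ℝ) :
    frobNorm (c • A) = |c| * frobNorm A := by
  unfold frobNorm
  rw [← Real.sqrt_sq_eq_abs, ← Real.sqrt_mul (sq_nonneg c)]
  congr 1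
  rw [Finset.mul_sum]
  refine Finset.sum_congr rfl fun i _ => ?_
  rw [Finset.mul_sum]
  refine Finset.sum_congr rfl fun j _ => ?_
  simp [Matrix.smul_apply, mul_pow]

lemma frobNorm_pos {n m : ℕ} {A : Matrix (Fin n) (Fin m) ℝ} (h : A ≠ 0) :
    0 < frobNorm A := by
  rcases lt_or_eq_of_le (frobNorm_nonneg A) with h' | h'
  · exact h'
  exfalso
  apply h
  have hsum : ∑ i, ∑ j, (A i j) ^ 2 = 0 := by
    have h2 : (∑ i, ∑ j, (A i j) ^ 2) ≤ 0 := Real.sqrt_eq_zero'.mp h'.symm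
    exact le_antisymm h2 (Finset.sum_nonneg fun i _ =>
        Finset.sum_nonneg fun j _ => sq_nonneg _)
  ext i j
  have h1 : ∀ i ∈ Finset.univ, (0:ℝ) ≤ ∑ j, (A i j) ^ 2 := fun i _ =>
    Finset.sum_nonneg fun j _ => sq_nonneg _
  have h2 := (Finset.sum_eq_zero_iff_of_nonneg h1).mp hsum i (Finset.mem_univ i)
  have h3 := (Finset.sum_eq_zero_iff_of_nonneg
    (fun j _ => sq_nonneg (A i j))).mp h2 j (Finset.mem_univ j)
  simpa using pow_eq_zero_iff (n := 2) (by norm_num) |>.mp h3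

lemma rank_add_le' {n m : ℕ} (A B : Matrix (Fin n) (Fin m) ℝ) :
    (A + B).rank ≤ A.rank + B.rank := by
  simp only [Matrix.rank]
  rw [Matrix.mulVecLin_add]
  calc Module.finrank ℝ ↥(LinearMap.range (A.mulVecLin + B.mulVecLin))
      ≤ Module.finrank ℝ ↥(LinearMap.range A.mulVecLin ⊔ LinearMap.range B.mulVecLin) := by
        apply Submodule.finrank_mono
        rintro x ⟨y, rfl⟩
        exact Submodule.add_mem_sup (LinearMap.mem_range_self _ y)
          (LinearMap.mem_range_self _ y)
    _ ≤ _ := Submodule.finrank_add_le_finrank_add_finrank _ _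

lemma rank_smul_le' {n m : ℕ} (c : ℝ) (A : Matrix (Fin n) (Fin m) ℝ) :
    (c • A).rank ≤ A.rank := by
  simp only [Matrix.rank]
  apply Submodule.finrank_mono
  rintro x ⟨y, rfl⟩
  exact ⟨c • y, by simp [Matrix.mulVecLin_apply, Matrix.mulVec_smul, Matrix.smul_mulVec]⟩

lemma rank_sum_le' {n m r : ℕ} (k : ℕ) (F : ℕ → Matrix (Fin n) (Fin m) ℝ)
    (hF : ∀ i, (F i).rank ≤ r) :
    (∑ i ∈ Finset.range k, F i).rank ≤ r * k := by
  induction k with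
  | zero => simp [Matrix.rank_zero]
  | succ k ih =>
    rw [Finset.sum_range_succ]
    calc (∑ i ∈ Finset.range k, F i + F k).rank
        ≤ (∑ i ∈ Finset.range k, F i).rank + (F k).rank := rank_add_le' _ _
      _ ≤ r * k + r := add_le_add ih (hF k)
      _ = r * (k + 1) := by ring

/-- Normalized version. Under the recursion `W_{s+1} = (1−2μλ)·W_s − μ·G_s`
with `rank(G_s) ≤ r` and `1 − 2μλ ≥ 0`, for every `t` and `k ≤ t` with `W_t ≠ 0` there is
`M` with `rank(M) ≤ r·k` and `‖W_t/‖W_t‖_F − M‖_F ≤ (1−2μλ)^k · ‖W_{t−k}‖_F / ‖W_t‖_F`. -/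
theorem stmt2 {n m r : ℕ} (μ lam : ℝ) (hμlam : 1 - 2 * μ * lam ≥ 0)
    (W G : ℕ → Matrix (Fin n) (Fin m) ℝ)
    (hW : ∀ s, W (s + 1) = (1 - 2 * μ * lam) • W s - μ • G s)
    (hG : ∀ s, (G s).rank ≤ r) :
    ∀ t k : ℕ, k ≤ t → W t ≠ 0 →
      ∃ M : Matrix (Fin n) (Fin m) ℝ, M.rank ≤ r * k ∧
        frobNorm ((1 / frobNorm (W t)) • W t - M) ≤
          (1 - 2 * μ * lam) ^ k * frobNorm (W (t - k)) / frobNorm (W t) := by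
  set c : ℝ := 1 - 2 * μ * lam with hc
  -- key recursion identity
  have key : ∀ j k : ℕ, W (j + k) =
      c ^ k • W j - ∑ i ∈ Finset.range k, (c ^ (k - 1 - i) * μ) • G (j + i) := by
    intro j k
    induction k with
    | zero => simp
    | succ k ih =>
      have : j + (k + 1) = (j + k) + 1 := by ring
      rw [this, hW (j + k), ih, Finset.sum_range_succ]
      have hre : ∀ i ∈ Finset.range k,
          c • ((c ^ (k - 1 - i) * μ) • G (j + i)) = (c ^ (k + 1 - 1 - i) * μ) • G (j + i) := by
        intro i hi
        rw [Finset.mem_range] at hi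
        rw [smul_smul]
        congr 1
        have : k + 1 - 1 - i = (k - 1 - i) + 1 := by omega
        rw [this, pow_succ]
        ring
      rw [smul_sub, Finset.smul_sum, Finset.sum_congr rfl hre, smul_smul, ← pow_succ']
      have : k + 1 - 1 - k = 0 := by omega
      rw [this]
      abel_nf
      rw [pow_zero, one_mul]
  intro t k hkt hWt
  have hWpos := frobNorm_pos hWt
  set S : Matrix (Fin n) (Fin m) ℝ :=
    ∑ i ∈ Finset.range k, (c ^ (k - 1 - i) * μ) • G (t - k + i) with hS
  refine ⟨(-(1 / frobNorm (W t))) • S, ?_, ?_⟩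
  · -- rank bound
    calc ((-(1 / frobNorm (W t))) • S).rank ≤ S.rank := rank_smul_le' _ _
      _ ≤ r * k := by
        rw [hS]
        exact rank_sum_le' k _ fun i => (rank_smul_le' _ _).trans (hG _)
  · -- norm bound
    have hkey := key (t - k) k
    rw [Nat.sub_add_cancel hkt] at hkey
    have hdiff : (1 / frobNorm (W t)) • W t - (-(1 / frobNorm (W t))) • S
        = ((1 / frobNorm (W t)) * c ^ k) • W (t - k) := by
      rw [neg_smul, sub_neg_eq_add, ← smul_add, mul_smul]
      congr 1
      rw [hkey, hS]
      abel
    rw [hdiff, frobNorm_smul]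
    have habs : |1 / frobNorm (W t) * c ^ k| = 1 / frobNorm (W t) * c ^ k := by
      rw [abs_of_nonneg]
      exact mul_nonneg (by positivity) (pow_nonneg hμlam _)
    rw [habs]
    apply le_of_eq
    field_simp
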